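/- For every odd natural number N ≥ 1, the quantity β_{N−1} = ½ (2N)^{1/4} ∫_ℝ φ_{N−1}(x) dx satisfies the exact formula β_{N−1} = (πN/2)^{1/4} · √((N−1)!) / (2^{(N−1)/2} · ((N−1)/2)!). Moreover, there is a constant C such that |β_{N−1} − 1| ≤ C/N for all odd N ≥ 1. -/

import Mathlib

open Real Filter MeasureTheory

/-- Physicists' Hermite polynomial `H_n(x) = (-1)^n e^{x²} (d^n/dx^n) e^{-x²}`. -/
noncomputable def physHermite (n : ℕ) (x : ℝ) : ℝ :=
  (-1 : ℝ) ^ n * Real.exp (x ^ 2) * iteratedDeriv n (fun t : ℝ => Real.exp (-t ^ 2)) x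

/-- Normalizing constant `h_n = √π 2^n n!`. -/
noncomputable def hNorm (n : ℕ) : ℝ := Real.sqrt Real.pi * 2 ^ n * (n.factorial : ℝ)

/-- Oscillator wave function `φ_n(x) = h_n^{-1/2} e^{-x²/2} H_n(x)`. -/
noncomputable def osc (n : ℕ) (x : ℝ) : ℝ :=
  hNorm n ^ (-(1 : ℝ) / 2) * Real.exp (-x ^ 2 / 2) * physHermite n x

/-- Airy function `Ai(x) = π⁻¹ lim_{R→∞} ∫₀^R cos(t³/3 + xt) dt`. -/
noncomputable def Ai (x : ℝ) : ℝ :=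
  Real.pi⁻¹ *
    limUnder Filter.atTop (fun R : ℝ => ∫ t in (0 : ℝ)..R, Real.cos (t ^ 3 / 3 + x * t))

/-- Scaling constant `τ_N = 2^{-1/2} N^{-1/6}`. -/
noncomputable def tauN (N : ℕ) : ℝ := (2 : ℝ) ^ (-(1 : ℝ) / 2) * (N : ℝ) ^ (-(1 : ℝ) / 6)

/-- `Δ_N = (√(2N+1) - √(2N-1))/τ_N`. -/
noncomputable def DeltaN (N : ℕ) : ℝ :=
  (Real.sqrt (2 * N + 1) - Real.sqrt (2 * N - 1)) / tauN N

/-- `β_{N-1} = ½ (2N)^{1/4} ∫_ℝ φ_{N-1}`. -/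
noncomputable def betaNm1 (N : ℕ) : ℝ :=
  (1 / 2) * (2 * N : ℝ) ^ ((1 : ℝ) / 4) * ∫ x : ℝ, osc (N - 1) x

/-! Writing `H_n(x) = √2ⁿ He_n(√2 x)` with the probabilists' Hermite polynomials
`He_n = hermite n`, the substitution `u = √2 x` turns `∫ φ_n` into a multiple of the moment
`K_n = ∫ He_n(u) e^{-u²/4} du`. Since `He_{n+2} = X He_{n+1} - He_{n+1}'` and
`He_{n+1}' = (n+1) He_n`, integrating by parts against the Gaussian gives `K_{n+2} = (n+1) K_n`,
hence `K_{2m} = 2√π (2m)! / (2^m m!)`, which gives the closed form of `β = β_{N-1}`, `N = 2m + 1`.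
It shows `β⁴ = (π/2) / W_m` for the Wallis product `W_m`, and the Wallis bounds
`(2m+1)/(2m+2) · π/2 ≤ W_m ≤ π/2` give `1 ≤ β ≤ β⁴ ≤ 1 + 1/N`. -/

open Polynomial

theorem Real.rpow_one_div_four_pow_four {x : ℝ} (hx : 0 ≤ x) : (x ^ ((1 : ℝ) / 4)) ^ 4 = x := by
  rw [one_div]
  exact rpow_inv_natCast_pow hx four_ne_zero

theorem Real.sqrt_pow_four {x : ℝ} (hx : 0 ≤ x) : √x ^ 4 = x ^ 2 := by
  rw [show 4 = 2 * 2 by rfl, pow_mul, sq_sqrt hx]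

theorem Polynomial.derivative_hermite_succ (n : ℕ) :
    derivative (hermite (n + 1)) = (n + 1 : ℤ[X]) * hermite n := by
  induction n with
  | zero => simp
  | succ n ih =>
    rw [hermite_succ (n + 1), derivative_sub, derivative_mul, derivative_X, one_mul, ih,
      derivative_mul, hermite_succ n]
    simp only [derivative_add, derivative_natCast, derivative_one]
    push_cast
    ring

theorem integrable_eval_mul_exp_neg_mul_sq {b : ℝ} (hb : 0 < b) (q : ℝ[X]) :
    Integrable fun x : ℝ => q.eval x * exp (-b * x ^ 2) := by
  induction q using Polynomial.induction_on' with
  | add p q hp hq => simpa only [eval_add, add_mul] using hp.fun_add hq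
  | monomial n a =>
    have h := integrable_rpow_mul_exp_neg_mul_sq hb (s := n)
      (by linarith [n.cast_nonneg (α := ℝ)])
    simpa [mul_assoc] using h.const_mul a

theorem integrable_mul_eval_mul_exp_neg_mul_sq {b : ℝ} (hb : 0 < b) (q : ℝ[X]) :
    Integrable fun x : ℝ => x * q.eval x * exp (-b * x ^ 2) := by
  have h := integrable_eval_mul_exp_neg_mul_sq hb (X * q)
  simp only [eval_mul, eval_X] at h
  exact h

theorem integral_eval_derivative_mul_exp_neg_mul_sq {b : ℝ} (hb : 0 < b) (q : ℝ[X]) :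
    ∫ x, (derivative q).eval x * exp (-b * x ^ 2) =
      2 * b * ∫ x, x * q.eval x * exp (-b * x ^ 2) := by
  have hderiv (x : ℝ) : HasDerivAt (fun x => q.eval x * exp (-b * x ^ 2))
      ((derivative q).eval x * exp (-b * x ^ 2) - 2 * b * (x * q.eval x * exp (-b * x ^ 2))) x := by
    have hexp := ((hasDerivAt_pow 2 x).const_mul (-b)).exp
    exact ((q.hasDerivAt x).fun_mul hexp).congr_deriv (by push_cast; ring)
  have hXq := integrable_mul_eval_mul_exp_neg_mul_sq hb q
  have h := integral_eq_zero_of_hasDerivAt_of_integrable hderiv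
    ((integrable_eval_mul_exp_neg_mul_sq hb _).sub (hXq.const_mul _))
    (integrable_eval_mul_exp_neg_mul_sq hb q)
  rw [integral_sub (integrable_eval_mul_exp_neg_mul_sq hb _) (hXq.const_mul _),
    integral_const_mul] at h
  linarith

noncomputable def hermiteMoment (n : ℕ) : ℝ :=
  ∫ x, aeval x (hermite n) * exp (-(1 / 4) * x ^ 2)

theorem hermiteMoment_zero : hermiteMoment 0 = 2 * √π := by
  rw [hermiteMoment, hermite_zero]
  simp only [map_one, one_mul, integral_gaussian]
  rw [show π / (1 / 4) = 2 ^ 2 * π by ring, sqrt_mul (by positivity), sqrt_sq zero_le_two]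

theorem hermiteMoment_add_two (n : ℕ) : hermiteMoment (n + 2) = (n + 1) * hermiteMoment n := by
  set q : ℝ[X] := (hermite (n + 1)).map (algebraMap ℤ ℝ)
  have hIBP := integral_eval_derivative_mul_exp_neg_mul_sq (b := 1 / 4) (by norm_num) q
  have hq' : derivative q = (n + 1 : ℝ[X]) * (hermite n).map (algebraMap ℤ ℝ) := by
    rw [derivative_map, derivative_hermite_succ, Polynomial.map_mul]
    simp
  have hsucc (x : ℝ) : aeval x (hermite (n + 2)) * exp (-(1 / 4) * x ^ 2) =
      x * q.eval x * exp (-(1 / 4) * x ^ 2) - (derivative q).eval x * exp (-(1 / 4) * x ^ 2) := by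
    rw [hermite_succ (n + 1), map_sub, map_mul, aeval_X, ← eval_map_algebraMap,
      ← eval_map_algebraMap, ← derivative_map]
    ring
  have hderiv :
      ∫ x, (derivative q).eval x * exp (-(1 / 4) * x ^ 2) = (n + 1) * hermiteMoment n := by
    simp only [hq', eval_mul, eval_add, eval_natCast, eval_one, eval_map_algebraMap, mul_assoc,
      integral_const_mul, hermiteMoment]
  rw [hermiteMoment, funext hsucc,
    integral_sub (integrable_mul_eval_mul_exp_neg_mul_sq (by norm_num) q)
      (integrable_eval_mul_exp_neg_mul_sq (by norm_num) _)]
  linarith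

theorem hermiteMoment_two_mul (m : ℕ) :
    hermiteMoment (2 * m) = 2 * √π * (2 * m).factorial / (2 ^ m * m.factorial) := by
  induction m with
  | zero => simp [hermiteMoment_zero]
  | succ m ih =>
    rw [show 2 * (m + 1) = 2 * m + 2 by ring, hermiteMoment_add_two, ih, Nat.factorial_succ,
      Nat.factorial_succ, Nat.factorial_succ]
    push_cast
    field_simp
    ring

theorem physHermite_eq_sqrt_two_pow_mul_aeval (n : ℕ) (x : ℝ) :
    physHermite n x = √2 ^ n * aeval (√2 * x) (hermite n) := by
  have hgauss : (fun t : ℝ => exp (-t ^ 2)) = fun t => (fun y => exp (-(y ^ 2 / 2))) (√2 * t) := by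
    funext t
    simp only [mul_pow, sq_sqrt zero_le_two]
    ring_nf
  have hsmooth : ContDiff ℝ n fun y : ℝ => exp (-(y ^ 2 / 2)) := by fun_prop
  rw [physHermite, hgauss, iteratedDeriv_comp_const_mul hsmooth, iteratedDeriv_eq_iterate]
  beta_reduce
  rw [deriv_gaussian_eq_hermite_mul_gaussian, mul_pow, sq_sqrt zero_le_two,
    show -(2 * x ^ 2 / 2) = -x ^ 2 by ring, exp_neg]
  field_simp
  simp [← pow_mul, pow_mul']

theorem integral_osc (n : ℕ) :
    ∫ x, osc n x = hNorm n ^ (-(1 : ℝ) / 2) * √2 ^ n / √2 * hermiteMoment n := by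
  have hosc (x : ℝ) : osc n x = hNorm n ^ (-(1 : ℝ) / 2) * √2 ^ n *
      (fun u => aeval u (hermite n) * exp (-(1 / 4) * u ^ 2)) (√2 * x) := by
    simp only [osc, physHermite_eq_sqrt_two_pow_mul_aeval, mul_pow, sq_sqrt zero_le_two]
    ring_nf
  rw [funext hosc, integral_const_mul,
    Measure.integral_comp_mul_left (fun u => aeval u (hermite n) * exp (-(1 / 4) * u ^ 2)),
    hermiteMoment, abs_of_nonneg (by positivity), smul_eq_mul]
  ring

theorem betaNm1_two_mul_add_one (m : ℕ) :
    betaNm1 (2 * m + 1) = (π * (2 * m + 1 : ℕ) / 2) ^ ((1 : ℝ) / 4) *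
      √((2 * m).factorial) / (2 ^ m * m.factorial) := by
  have hinvroot4 {x : ℝ} (hx : 0 ≤ x) : (x ^ (-(1 : ℝ) / 2)) ^ 4 = (x ^ 2)⁻¹ := by
    rw [← rpow_natCast, ← rpow_mul hx, ← rpow_natCast, ← rpow_neg hx]
    norm_num
  rw [betaNm1, Nat.add_sub_cancel, integral_osc, hermiteMoment_two_mul, hNorm,
    pow_mul √2, sq_sqrt zero_le_two]
  refine (pow_left_inj₀ ?_ ?_ four_ne_zero).mp ?_
  · positivity
  · positivity
  simp (disch := positivity) only [mul_pow, div_pow, rpow_one_div_four_pow_four, hinvroot4,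
    sqrt_pow_four, sq_sqrt]
  field_simp
  ring

theorem betaNm1_two_mul_add_one_pow_four (m : ℕ) :
    betaNm1 (2 * m + 1) ^ 4 = π / 2 / Wallis.W m := by
  rw [betaNm1_two_mul_add_one, Wallis.W_eq_factorial_ratio]
  simp (disch := positivity) only [mul_pow, div_pow, rpow_one_div_four_pow_four, sqrt_pow_four]
  field_simp
  push_cast
  ring

theorem abs_betaNm1_two_mul_add_one_sub_one_le (m : ℕ) :
    |betaNm1 (2 * m + 1) - 1| ≤ 1 / (2 * m + 1 : ℕ) := by
  have hβ : 0 ≤ betaNm1 (2 * m + 1) := by rw [betaNm1_two_mul_add_one]; positivity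
  have hW := Wallis.W_pos m
  have hlower : 1 ≤ betaNm1 (2 * m + 1) ^ 4 := by
    rw [betaNm1_two_mul_add_one_pow_four, le_div_iff₀ hW, one_mul]
    exact Wallis.W_le m
  have hupper : betaNm1 (2 * m + 1) ^ 4 ≤ 1 + 1 / (2 * m + 1 : ℕ) := by
    rw [betaNm1_two_mul_add_one_pow_four, div_le_iff₀ hW]
    calc π / 2 = (1 + 1 / (2 * m + 1 : ℕ)) * ((2 * m + 1) / (2 * m + 2) * (π / 2)) := by
          push_cast
          field_simp
          ring
      _ ≤ (1 + 1 / (2 * m + 1 : ℕ)) * Wallis.W m := by gcongr; exact Wallis.le_W m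
  have hβ1 : 1 ≤ betaNm1 (2 * m + 1) := (one_le_pow_iff_of_nonneg hβ four_ne_zero).mp hlower
  have hle : betaNm1 (2 * m + 1) ≤ betaNm1 (2 * m + 1) ^ 4 := le_self_pow₀ hβ1 four_ne_zero
  rw [abs_of_nonneg (by linarith)]
  linarith

/-- Exact formula for `β_{N-1}` for odd `N`, and the estimate `|β_{N-1} - 1| ≤ C/N`. -/
theorem betaNm1_formula_and_estimate :
    (∀ N : ℕ, Odd N → 1 ≤ N →
      betaNm1 N = (Real.pi * N / 2) ^ ((1 : ℝ) / 4) *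
        Real.sqrt ((N - 1).factorial) /
          (2 ^ ((N - 1) / 2) * (((N - 1) / 2).factorial : ℝ))) ∧
    ∃ C : ℝ, ∀ N : ℕ, Odd N → 1 ≤ N → |betaNm1 N - 1| ≤ C / N := by
  refine ⟨?_, 1, ?_⟩ <;> rintro N ⟨m, rfl⟩ -
  · rw [Nat.add_sub_cancel, Nat.mul_div_cancel_left m two_pos]
    exact betaNm1_two_mul_add_one m
  · exact abs_betaNm1_two_mul_add_one_sub_one_le m
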